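/- arXiv:math/0107140 — 2 statements merged into one kernel-verified Lean document; each statement's English description precedes it below -/
import Mathlib

section
/- In the above setting, for any two spanning trees t_1, t_2 of G_-, the number of spanning trees t of G with t ∈ Γ* and t ⊇ t_1 equals the number of spanning trees t of G with t ∈ Γ* and t ⊇ t_2; the bijection is given by t ↦ (t∖t_1) ∪ t_2. -/
open Finset
open scoped Classical

set_option maxHeartbeats 1000000

/-- `t` (a finite set of edges) is a spanning tree of the graph `G`. -/
def SpTree {W : Type*} (G : SimpleGraph W) (t : Finset (Sym2 W)) : Prop :=
  ↑t ⊆ G.edgeSet ∧ (∀ e ∈ t, ¬ e.IsDiag) ∧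
    (SimpleGraph.fromEdgeSet (↑t : Set (Sym2 W))).IsTree

/-- The event `Γ*`: for every vertex `w ∉ D`, the path in the tree `t` from `w`
to `ρ` avoids `D` (expressed as the existence of a walk avoiding `D`). -/
def AvoidsD {V : Type*} (t : Finset (Sym2 V)) (ρ : V) (D : Finset V) : Prop :=
  ∀ w : V, w ∉ D → ∃ p : (SimpleGraph.fromEdgeSet (↑t : Set (Sym2 V))).Walk w ρ,
    ∀ v ∈ p.support, v ∉ D

/-!
Write `T₁`, `T₂` for the edge sets of `t₁`, `t₂` viewed in `G`. If `t` is a spanning tree of `G`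
containing `T₁`, every edge of `t` with both ends outside `D` already lies in `T₁`: `T₁` joins its
ends and an edge of an acyclic graph is a bridge. Hence `t \ T₁` is disjoint from `T₂`, and
`(t \ T₁) ∪ T₂` has as many edges as `t`; it is connected since each removed edge is bypassed by a
path of `T₂`, so it is a spanning tree. It lies in `Γ*` because `T₂` alone joins every vertex
outside `D` to `ρ` without meeting `D`. Swapping back is the inverse map.
-/

namespace SimpleGraph

variable {V : Type*} {G H : SimpleGraph V}

lemma Reachable.of_forall_adj_reachable (hadj : ∀ ⦃a b : V⦄, G.Adj a b → H.Reachable a b)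
    {a b : V} (h : G.Reachable a b) : H.Reachable a b := by
  rw [reachable_iff_reflTransGen] at h ⊢
  exact Relation.ReflTransGen.lift' id
    (fun _ _ hab => (reachable_iff_reflTransGen _ _).mp (hadj hab)) _ _ h

lemma IsAcyclic.adj_of_le_of_reachable (hG : G.IsAcyclic) (hle : H ≤ G) {u v : V}
    (huv : G.Adj u v) (hH : H.Reachable u v) : H.Adj u v := by
  by_contra hne
  refine isBridge_iff.mp (isAcyclic_iff_forall_adj_isBridge.mp hG huv) (hH.mono fun a b hab => ?_)
  refine deleteEdges_adj.mpr ⟨hle hab, fun he => hne ?_⟩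
  rw [← mem_edgeSet, ← Set.mem_singleton_iff.mp he]
  exact hab

lemma edgeSet_fromEdgeSet_of_forall_not_isDiag {s : Set (Sym2 V)} (hs : ∀ e ∈ s, ¬ e.IsDiag) :
    (fromEdgeSet s).edgeSet = s := by
  rw [edgeSet_fromEdgeSet, sdiff_eq_left, Set.disjoint_left]
  exact hs

end SimpleGraph

open SimpleGraph

section SpTree

variable {W : Type*} {H : SimpleGraph W} {s : Finset (Sym2 W)}

lemma SpTree.reachable (h : SpTree H s) (a b : W) :
    (fromEdgeSet (s : Set (Sym2 W))).Reachable a b :=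
  h.2.2.connected.preconnected a b

variable [Finite W]

lemma spTree_iff : SpTree H s ↔ ↑s ⊆ H.edgeSet ∧ (∀ e ∈ s, ¬ e.IsDiag) ∧
    (fromEdgeSet (s : Set (Sym2 W))).Connected ∧ s.card + 1 = Nat.card W := by
  refine and_congr_right fun _ => and_congr_right fun hs => ?_
  rw [isTree_iff_connected_and_card, edgeSet_fromEdgeSet_of_forall_not_isDiag hs]
  simp only [SetLike.coe_sort_coe, Nat.card_eq_fintype_card, Fintype.card_coe]

lemma SpTree.card_add_one (h : SpTree H s) : s.card + 1 = Nat.card W :=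
  (spTree_iff.mp h).2.2.2

end SpTree

section Lift

variable {V : Type*} [DecidableEq V] {S : Set V}

lemma mem_of_mem_image_map_val {s : Finset (Sym2 S)} {e : Sym2 V}
    (he : e ∈ s.image (Sym2.map Subtype.val)) {v : V} (hv : v ∈ e) : v ∈ S := by
  obtain ⟨f, -, rfl⟩ := mem_image.mp he
  obtain ⟨a, -, rfl⟩ := Sym2.mem_map.mp hv
  exact a.2

lemma card_image_map_val (s : Finset (Sym2 S)) : (s.image (Sym2.map Subtype.val)).card = s.card :=
  card_image_of_injective _ (Sym2.map.injective Subtype.val_injective)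

lemma coe_image_map_val_subset_edgeSet {G : SimpleGraph V} {s : Finset (Sym2 S)}
    (hs : ↑s ⊆ (G.induce S).edgeSet) : ↑(s.image (Sym2.map Subtype.val)) ⊆ G.edgeSet := by
  rintro _ he
  obtain ⟨f, hf, rfl⟩ := mem_image.mp he
  induction f using Sym2.ind with
  | _ a b => exact hs hf

lemma not_isDiag_of_mem_image_map_val {s : Finset (Sym2 S)} (hs : ∀ e ∈ s, ¬ e.IsDiag)
    {e : Sym2 V} (he : e ∈ s.image (Sym2.map Subtype.val)) : ¬ e.IsDiag := by
  obtain ⟨f, hf, rfl⟩ := mem_image.mp he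
  rw [Sym2.isDiag_map Subtype.val_injective]
  exact hs f hf

lemma SimpleGraph.Reachable.exists_walk_image_map_val {s : Finset (Sym2 S)} {a b : S}
    (h : (fromEdgeSet (s : Set (Sym2 S))).Reachable a b) :
    ∃ p : (fromEdgeSet (↑(s.image (Sym2.map Subtype.val)) : Set (Sym2 V))).Walk a b,
      ∀ v ∈ p.support, v ∈ S := by
  obtain ⟨q⟩ := h
  let f : fromEdgeSet (s : Set (Sym2 S)) →g
      fromEdgeSet (↑(s.image (Sym2.map Subtype.val)) : Set (Sym2 V)) :=
    ⟨Subtype.val, fun {x y} hxy => (fromEdgeSet_adj _).mpr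
      ⟨mem_image_of_mem _ ((fromEdgeSet_adj _).mp hxy).1,
        Subtype.val_injective.ne ((fromEdgeSet_adj _).mp hxy).2⟩⟩
  refine ⟨q.map f, fun v hv => ?_⟩
  obtain ⟨u, -, rfl⟩ := List.mem_map.mp (by simpa only [Walk.support_map] using hv)
  exact u.2

end Lift

section Swap

variable {V : Type*} [DecidableEq V] {G : SimpleGraph V} {S : Set V}
  {t : Finset (Sym2 V)} {t₁ t₂ : Finset (Sym2 S)}

lemma SpTree.mem_image_map_val_of_subset (ht : SpTree G t) (h₁ : SpTree (G.induce S) t₁)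
    (hsub : t₁.image (Sym2.map Subtype.val) ⊆ t) {e : Sym2 V} (he : e ∈ t)
    (heS : ∀ v ∈ e, v ∈ S) : e ∈ t₁.image (Sym2.map Subtype.val) := by
  induction e using Sym2.ind with
  | _ u v =>
    have hadj : (fromEdgeSet (t : Set (Sym2 V))).Adj u v :=
      (fromEdgeSet_adj _).mpr ⟨he, fun h => ht.2.1 _ he (Sym2.mk_isDiag_iff.mpr h)⟩
    obtain ⟨p, -⟩ := (h₁.reachable ⟨u, heS u (Sym2.mem_mk_left u v)⟩
      ⟨v, heS v (Sym2.mem_mk_right u v)⟩).exists_walk_image_map_val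
    exact ((fromEdgeSet_adj _).mp (ht.2.2.isAcyclic.adj_of_le_of_reachable
      (fromEdgeSet_mono (by exact_mod_cast hsub)) hadj ⟨p⟩)).1

lemma SpTree.disjoint_sdiff_image_map_val (ht : SpTree G t) (h₁ : SpTree (G.induce S) t₁)
    (hsub : t₁.image (Sym2.map Subtype.val) ⊆ t) :
    Disjoint (t \ t₁.image (Sym2.map Subtype.val)) (t₂.image (Sym2.map Subtype.val)) := by
  refine disjoint_left.mpr fun e he he₂ => (mem_sdiff.mp he).2 ?_
  exact ht.mem_image_map_val_of_subset h₁ hsub (mem_sdiff.mp he).1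
    fun v hv => mem_of_mem_image_map_val he₂ hv

lemma SpTree.swap [Finite V] (ht : SpTree G t) (h₁ : SpTree (G.induce S) t₁)
    (h₂ : SpTree (G.induce S) t₂) (hsub : t₁.image (Sym2.map Subtype.val) ⊆ t) :
    SpTree G ((t \ t₁.image (Sym2.map Subtype.val)) ∪ t₂.image (Sym2.map Subtype.val)) := by
  obtain ⟨htG, htd, htc, htcard⟩ := spTree_iff.mp ht
  obtain ⟨h₂G, h₂d, -, h₂card⟩ := spTree_iff.mp h₂
  have hsub₂ : t₂.image (Sym2.map Subtype.val) ⊆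
      (t \ t₁.image (Sym2.map Subtype.val)) ∪ t₂.image (Sym2.map Subtype.val) :=
    subset_union_right
  refine spTree_iff.mpr ⟨?_, ?_, ?_, ?_⟩
  · rw [coe_union]
    exact Set.union_subset ((coe_subset.mpr sdiff_subset).trans htG)
      (coe_image_map_val_subset_edgeSet h₂G)
  · intro e he
    rcases mem_union.mp he with he | he
    · exact htd e (mem_sdiff.mp he).1
    · exact not_isDiag_of_mem_image_map_val h₂d he
  · have := htc.nonempty
    refine ⟨fun a b => (htc.preconnected a b).of_forall_adj_reachable fun x y hxy => ?_⟩
    obtain ⟨hxy, hne⟩ := (fromEdgeSet_adj _).mp hxy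
    by_cases h₁xy : s(x, y) ∈ t₁.image (Sym2.map Subtype.val)
    · obtain ⟨p, -⟩ := (h₂.reachable ⟨x, mem_of_mem_image_map_val h₁xy (Sym2.mem_mk_left x y)⟩
        ⟨y, mem_of_mem_image_map_val h₁xy (Sym2.mem_mk_right x y)⟩).exists_walk_image_map_val
      exact ⟨p.mapLe (fromEdgeSet_mono (by exact_mod_cast hsub₂))⟩
    · exact ((fromEdgeSet_adj _).mpr
        ⟨mem_union_left _ (mem_sdiff.mpr ⟨hxy, h₁xy⟩), hne⟩).reachable
  · have h₁card := h₁.card_add_one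
    have hle := card_le_card hsub
    rw [card_image_map_val] at hle
    rw [card_union_of_disjoint (ht.disjoint_sdiff_image_map_val h₁ hsub),
      card_sdiff_of_subset hsub, card_image_map_val, card_image_map_val]
    omega

lemma SpTree.swap_swap (ht : SpTree G t) (h₁ : SpTree (G.induce S) t₁)
    (hsub : t₁.image (Sym2.map Subtype.val) ⊆ t) :
    (((t \ t₁.image (Sym2.map Subtype.val)) ∪ t₂.image (Sym2.map Subtype.val)) \
      t₂.image (Sym2.map Subtype.val)) ∪ t₁.image (Sym2.map Subtype.val) = t := by
  rw [union_sdiff_right, (ht.disjoint_sdiff_image_map_val h₁ hsub).sdiff_eq_left,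
    sdiff_union_of_subset hsub]

end Swap

section GammaStar

variable {V : Type*} [DecidableEq V] {G : SimpleGraph V} {ρ : V} {D : Finset V}
  {t₁ t₂ : Finset (Sym2 {v : V // v ∉ D})}

lemma avoidsD_of_image_map_val_subset (hρD : ρ ∉ D) (h₁ : SpTree (G.induce {v | v ∉ D}) t₁)
    {t : Finset (Sym2 V)} (hsub : t₁.image (Sym2.map Subtype.val) ⊆ t) : AvoidsD t ρ D := by
  intro w hw
  obtain ⟨p, hp⟩ := (h₁.reachable ⟨w, hw⟩ ⟨ρ, hρD⟩).exists_walk_image_map_val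
  refine ⟨p.mapLe (fromEdgeSet_mono (by exact_mod_cast hsub)), ?_⟩
  rw [Walk.support_mapLe_eq_support]
  exact hp

def gammaStarContaining (G : SimpleGraph V) (ρ : V) (D : Finset V)
    (s : Finset (Sym2 {v : V // v ∉ D})) : Set (Finset (Sym2 V)) :=
  {t | SpTree G t ∧ AvoidsD t ρ D ∧ s.image (Sym2.map Subtype.val) ⊆ t}

variable [Finite V]

lemma mapsTo_swap_gammaStarContaining (hρD : ρ ∉ D)
    (h₁ : SpTree (G.induce {v | v ∉ D}) t₁) (h₂ : SpTree (G.induce {v | v ∉ D}) t₂) :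
    Set.MapsTo
      (fun t => (t \ t₁.image (Sym2.map Subtype.val)) ∪ t₂.image (Sym2.map Subtype.val))
      (gammaStarContaining G ρ D t₁) (gammaStarContaining G ρ D t₂) := by
  rintro t ⟨ht, -, hsub⟩
  exact ⟨ht.swap h₁ h₂ hsub, avoidsD_of_image_map_val_subset hρD h₂ subset_union_right,
    subset_union_right⟩

lemma bijOn_swap_gammaStarContaining (hρD : ρ ∉ D)
    (h₁ : SpTree (G.induce {v | v ∉ D}) t₁) (h₂ : SpTree (G.induce {v | v ∉ D}) t₂) :
    Set.BijOn
      (fun t => (t \ t₁.image (Sym2.map Subtype.val)) ∪ t₂.image (Sym2.map Subtype.val))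
      (gammaStarContaining G ρ D t₁) (gammaStarContaining G ρ D t₂) :=
  Set.InvOn.bijOn ⟨fun _ ht => ht.1.swap_swap h₁ ht.2.2, fun _ ht => ht.1.swap_swap h₂ ht.2.2⟩
    (mapsTo_swap_gammaStarContaining hρD h₁ h₂) (mapsTo_swap_gammaStarContaining hρD h₂ h₁)

end GammaStar

theorem statement15_general {V : Type*} [Fintype V] [DecidableEq V] (G : SimpleGraph V)
    (ρ : V) (D : Finset V) (hρD : ρ ∉ D)
    (t₁ t₂ : Finset (Sym2 {v : V // v ∉ D}))
    (h₁ : SpTree (G.induce {v : V | v ∉ D}) t₁)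
    (h₂ : SpTree (G.induce {v : V | v ∉ D}) t₂) :
    Set.BijOn
      (fun t : Finset (Sym2 V) =>
        (t \ t₁.image (Sym2.map Subtype.val)) ∪ t₂.image (Sym2.map Subtype.val))
      {t : Finset (Sym2 V) | SpTree G t ∧ AvoidsD t ρ D ∧
          t₁.image (Sym2.map Subtype.val) ⊆ t}
      {t : Finset (Sym2 V) | SpTree G t ∧ AvoidsD t ρ D ∧
          t₂.image (Sym2.map Subtype.val) ⊆ t} ∧
    Set.ncard {t : Finset (Sym2 V) | SpTree G t ∧ AvoidsD t ρ D ∧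
        t₁.image (Sym2.map Subtype.val) ⊆ t} =
    Set.ncard {t : Finset (Sym2 V) | SpTree G t ∧ AvoidsD t ρ D ∧
        t₂.image (Sym2.map Subtype.val) ⊆ t} :=
  have hbij := bijOn_swap_gammaStarContaining hρD h₁ h₂
  ⟨hbij, hbij.ncard_eq⟩

theorem statement15 {V : Type*} [Fintype V] [DecidableEq V] (G : SimpleGraph V)
    (hG : G.Connected) (ρ : V) (D : Finset V) (hρD : ρ ∉ D)
    (t₁ t₂ : Finset (Sym2 {v : V // v ∉ D}))
    (h₁ : SpTree (G.induce {v : V | v ∉ D}) t₁)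
    (h₂ : SpTree (G.induce {v : V | v ∉ D}) t₂) :
    Set.BijOn
      (fun t : Finset (Sym2 V) =>
        (t \ t₁.image (Sym2.map Subtype.val)) ∪ t₂.image (Sym2.map Subtype.val))
      {t : Finset (Sym2 V) | SpTree G t ∧ AvoidsD t ρ D ∧
          t₁.image (Sym2.map Subtype.val) ⊆ t}
      {t : Finset (Sym2 V) | SpTree G t ∧ AvoidsD t ρ D ∧
          t₂.image (Sym2.map Subtype.val) ⊆ t} ∧
    Set.ncard {t : Finset (Sym2 V) | SpTree G t ∧ AvoidsD t ρ D ∧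
        t₁.image (Sym2.map Subtype.val) ⊆ t} =
    Set.ncard {t : Finset (Sym2 V) | SpTree G t ∧ AvoidsD t ρ D ∧
        t₂.image (Sym2.map Subtype.val) ⊆ t} :=
  statement15_general G ρ D hρD t₁ t₂ h₁ h₂
end

section
/- Let α,β,γ ∈ [0,d) with γ = α+β−d > 0, and let x,y,z ∈ Z^d with ⟨zx⟩ ≤ ⟨zy⟩. Let A := {a ∈ Z^d : ⟨az⟩ ≤ ⟨zx⟩/2}. Then Σ_{a∈A} ⟨ax⟩^{−α}⟨ay⟩^{−β}⟨az⟩^{−γ} ≤ C·⟨zx⟩^{−γ}⟨zy⟩^{−γ} ≤ C·⟨xyz⟩^{−γ}, where C depends only on α,β,d. -/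
open MeasureTheory ProbabilityTheory Finset

set_option maxHeartbeats 1000000

abbrev Zd (d : ℕ) := Fin d → ℤ

noncomputable def br {d : ℕ} (x y : Zd d) : ℝ := 1 + ∑ i, |(x i : ℝ) - y i|

lemma br_symm {d : ℕ} (x y : Zd d) : br x y = br y x := by
  simp [br, abs_sub_comm]

noncomputable def spread {d : ℕ} (W : Finset (Zd d)) : ℝ :=
  sInf {p | ∃ E : Finset (Sym2 {x // x ∈ W}),
    (SimpleGraph.fromEdgeSet (↑E : Set (Sym2 {x // x ∈ W}))).IsTree ∧ (∀ e ∈ E, ¬ e.IsDiag) ∧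
    p = ∏ e ∈ E, Sym2.lift ⟨fun u v => br u.1 v.1, fun u v => br_symm u.1 v.1⟩ e}

noncomputable def rho {d : ℕ} (V W : Finset (Zd d)) : ℝ :=
  sInf {p | ∃ v ∈ V, ∃ w ∈ W, p = br v w}

abbrev RRel (d : ℕ) := Zd d × Zd d → Prop

def HasStochDim {Ω : Type*} [MeasurableSpace Ω] {d : ℕ} (P : Measure Ω)
    (R : Ω → RRel d) (δ : ℝ) : Prop :=
  0 < δ ∧ δ ≤ d ∧ ∃ C : ℝ, 0 < C ∧ ∀ x z y w : Zd d,
    br x z ^ (δ - d) ≤ C * (P {ω | R ω (x, z)}).toReal ∧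
    (P {ω | R ω (x, z) ∧ R ω (y, w)}).toReal ≤
      C * br x z ^ (δ - d) * br y w ^ (δ - d) + C * spread {x, z, y, w} ^ (δ - d)

def relComp {Ω : Type*} {d : ℕ} (L R : Ω → RRel d) : Ω → RRel d :=
  fun ω p => ∃ y, L ω (p.1, y) ∧ R ω (y, p.2)

def relRComp {Ω : Type*} {d : ℕ} (L R : Ω → RRel d) : Ω → RRel d :=
  fun ω p => ∃ y, L ω (p.1, y) ∧ R ω (y, p.2) ∧ br p.1 p.2 ≤ min (br p.1 y) (br y p.2)

def leftTail {Ω : Type*} [MeasurableSpace Ω] {d : ℕ} (R : Ω → RRel d) (v : Zd d) :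
    MeasurableSpace Ω :=
  ⨅ K : Finset (Zd d), MeasurableSpace.generateFrom
    {A | ∃ y : Zd d, y ∉ K ∧ A = {ω | R ω (v, y)}}

def rightTail {Ω : Type*} [MeasurableSpace Ω] {d : ℕ} (R : Ω → RRel d) (v : Zd d) :
    MeasurableSpace Ω :=
  ⨅ K : Finset (Zd d), MeasurableSpace.generateFrom
    {A | ∃ y : Zd d, y ∉ K ∧ A = {ω | R ω (y, v)}}

def remoteTail {Ω : Type*} [MeasurableSpace Ω] {d : ℕ} (R : Ω → RRel d) :
    MeasurableSpace Ω :=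
  ⨅ (K₁ : Finset (Zd d)) (K₂ : Finset (Zd d)), MeasurableSpace.generateFrom
    {A | ∃ x y : Zd d, x ∉ K₁ ∧ y ∉ K₂ ∧ A = {ω | R ω (x, y)}}

def TrivialField {Ω : Type*} [MeasurableSpace Ω] (P : Measure Ω)
    (m : MeasurableSpace Ω) : Prop :=
  ∀ A : Set Ω, MeasurableSet[m] A → P A = 0 ∨ P A = 1

def IsSRW {Ω : Type*} [MeasurableSpace Ω] {d : ℕ} (P : Measure Ω) (x : Zd d)
    (X : ℕ → Ω → Zd d) : Prop :=
  ∀ (n : ℕ) (a : ℕ → Zd d),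
    (P {ω | ∀ i ≤ n, X i ω = a i}).toReal =
      if a 0 = x ∧ ∀ i < n, (∑ j, |a (i + 1) j - a i j|) = 1 then (1 / (2 * d) : ℝ) ^ n else 0

/-!
On `A` the triangle inequality gives `⟨ax⟩ ≥ ⟨zx⟩/2` and `⟨ay⟩ ≥ ⟨zy⟩/2`, so the sum is at most
`2^(α+β) ⟨zx⟩^(-α) ⟨zy⟩^(-β) ∑ ⟨az⟩^(-γ)`, the last sum running over the cube of side `~⟨zx⟩`
around `z`. Bounding `⟨az⟩` below by the geometric mean of the `1 + |aᵢ - zᵢ|` factors that sum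
into one-dimensional sums `∑_{|t| ≤ M} (1 + |t|)^(-γ/d) ≲ M^(1-γ/d)`, so it is `≲ ⟨zx⟩^(d-γ)`.
Finally `α + β = d + γ`, `α ≤ d` and `⟨zx⟩ ≤ ⟨zy⟩` give
`⟨zx⟩^(d-γ-α) ⟨zy⟩^(-β) ≤ ⟨zx⟩^(-γ) ⟨zy⟩^(-γ)`. The second inequality is `⟨xyz⟩ ≤ ⟨yz⟩⟨zx⟩`.
-/

lemma mul_rpow_sub_one_le_rpow_sub_rpow {p : ℝ} (hp0 : 0 < p) (hp1 : p ≤ 1) {x : ℝ} (hx : 0 ≤ x) :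
    p * (x + 1) ^ (p - 1) ≤ (x + 1) ^ p - x ^ p := by
  have hx1 : 0 < x + 1 := by linarith
  have hbern := rpow_one_add_le_one_add_mul_self (s := -(x + 1)⁻¹)
    (by rw [neg_le_neg_iff]; exact inv_le_one_of_one_le₀ (by linarith)) hp0.le hp1
  have hx' : 1 + -(x + 1)⁻¹ = x * (x + 1)⁻¹ := by field_simp; ring
  rw [hx', Real.mul_rpow hx (inv_nonneg.mpr hx1.le), Real.inv_rpow hx1.le] at hbern
  rw [Real.rpow_sub_one hx1.ne']
  have hxp : 0 < (x + 1) ^ p := Real.rpow_pos_of_pos hx1 p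
  have := mul_le_mul_of_nonneg_right hbern hxp.le
  rw [mul_assoc, inv_mul_cancel₀ hxp.ne', mul_one] at this
  have e : (1 + p * -(x + 1)⁻¹) * (x + 1) ^ p = (x + 1) ^ p - p * ((x + 1) ^ p / (x + 1)) := by
    field_simp
    ring
  linarith

lemma sum_range_rpow_neg_le {s : ℝ} (hs0 : 0 ≤ s) (hs1 : s < 1) (N : ℕ) :
    ∑ n ∈ Finset.range N, ((n : ℝ) + 1) ^ (-s) ≤ (N : ℝ) ^ (1 - s) / (1 - s) := by
  have hp : 0 < 1 - s := by linarith
  rw [le_div_iff₀ hp, Finset.sum_mul]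
  calc ∑ n ∈ Finset.range N, ((n : ℝ) + 1) ^ (-s) * (1 - s)
      ≤ ∑ n ∈ Finset.range N, (((n + 1 : ℕ) : ℝ) ^ (1 - s) - ((n : ℕ) : ℝ) ^ (1 - s)) :=
        Finset.sum_le_sum fun n _ => by
          have := mul_rpow_sub_one_le_rpow_sub_rpow hp (by linarith) n.cast_nonneg
          rw [show 1 - s - 1 = -s by ring] at this
          push_cast
          linarith
    _ = (N : ℝ) ^ (1 - s) := by
        rw [Finset.sum_range_sub (fun k : ℕ => ((k : ℕ) : ℝ) ^ (1 - s)), Nat.cast_zero,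
          Real.zero_rpow hp.ne', sub_zero]

lemma sum_Icc_natAbs_le {f : ℕ → ℝ} (hf : ∀ n, 0 ≤ f n) (c : ℤ) (M : ℕ) :
    ∑ j ∈ Finset.Icc (c - M) (c + M), f (j - c).natAbs
      ≤ 2 * ∑ n ∈ Finset.range (M + 1), f n := by
  set up := (Finset.range (M + 1)).image fun n : ℕ => c + n
  set down := (Finset.range (M + 1)).image fun n : ℕ => c - n
  have hsub : Finset.Icc (c - M) (c + M) ⊆ up ∪ down := by
    intro j hj
    rw [Finset.mem_Icc] at hj
    simp only [up, down, Finset.mem_union, Finset.mem_image, Finset.mem_range]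
    rcases le_total c j with h | h
    · exact Or.inl ⟨(j - c).toNat, by omega, by omega⟩
    · exact Or.inr ⟨(c - j).toNat, by omega, by omega⟩
  have hsplit := Finset.sum_union_inter (s₁ := up) (s₂ := down) (f := fun j => f (j - c).natAbs)
  have hinter := Finset.sum_nonneg fun j (_ : j ∈ up ∩ down) => hf (j - c).natAbs
  have hup : ∑ j ∈ up, f (j - c).natAbs ≤ ∑ n ∈ Finset.range (M + 1), f n :=
    (Finset.sum_image_le_of_nonneg fun _ _ => hf _).trans_eq <|
      Finset.sum_congr rfl fun n _ => by simp
  have hdown : ∑ j ∈ down, f (j - c).natAbs ≤ ∑ n ∈ Finset.range (M + 1), f n :=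
    (Finset.sum_image_le_of_nonneg fun _ _ => hf _).trans_eq <|
      Finset.sum_congr rfl fun n _ => by simp
  calc ∑ j ∈ Finset.Icc (c - M) (c + M), f (j - c).natAbs ≤ ∑ j ∈ up ∪ down, f (j - c).natAbs :=
        Finset.sum_le_sum_of_subset_of_nonneg hsub fun _ _ _ => hf _
    _ ≤ 2 * ∑ n ∈ Finset.range (M + 1), f n := by linarith

lemma sum_Icc_rpow_neg_le {s : ℝ} (hs0 : 0 ≤ s) (hs1 : s < 1) (c : ℤ) (M : ℕ) :
    ∑ j ∈ Finset.Icc (c - M) (c + M), (1 + |(j : ℝ) - c|) ^ (-s)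
      ≤ 2 * ((M : ℝ) + 1) ^ (1 - s) / (1 - s) := by
  have h := sum_Icc_natAbs_le (f := fun n : ℕ => ((n : ℝ) + 1) ^ (-s))
    (fun n => by positivity) c M
  have hM := sum_range_rpow_neg_le hs0 hs1 (M + 1)
  simp only [Nat.cast_natAbs, Int.cast_abs, Int.cast_sub] at h
  push_cast at hM
  simp only [add_comm (1 : ℝ), mul_div_assoc]
  linarith

lemma tsum_subtype_le_sum {ι : Type*} {p : ι → Prop} {t : Finset ι} {f g : ι → ℝ}
    (hpt : ∀ i, p i → i ∈ t) (hfg : ∀ i, p i → f i ≤ g i) (hg : ∀ i ∈ t, 0 ≤ g i) :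
    ∑' i : {i // p i}, f i ≤ ∑ i ∈ t, g i := by
  classical
  have hsupp : ∀ i ∉ t, {i | p i}.indicator f i = 0 := fun i hi =>
    Set.indicator_of_notMem (fun h => hi (hpt i h)) f
  refine ((_root_.tsum_subtype {i | p i} f).trans (tsum_eq_sum hsupp)).trans_le <|
    Finset.sum_le_sum fun i hi => ?_
  by_cases h : p i
  · rw [Set.indicator_of_mem (show i ∈ {i | p i} from h)]; exact hfg i h
  · rw [Set.indicator_of_notMem (show i ∉ {i | p i} from h)]; exact hg i hi

lemma rpow_neg_le_of_half_le {r t p : ℝ} (hr : 0 < r) (hp : 0 ≤ p) (h : r / 2 ≤ t) :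
    t ^ (-p) ≤ 2 ^ p * r ^ (-p) := by
  calc t ^ (-p) ≤ (r / 2) ^ (-p) := Real.rpow_le_rpow_of_nonpos (by positivity) h (by linarith)
    _ = 2 ^ p * r ^ (-p) := by
        rw [Real.div_rpow hr.le zero_le_two, Real.rpow_neg zero_le_two, div_inv_eq_mul, mul_comm]

lemma rpow_neg_mul_rpow_neg_mul_rpow_le {u v α β e : ℝ} (hu : 0 < u) (huv : u ≤ v) (hα : α ≤ e) :
    u ^ (-α) * v ^ (-β) * u ^ (e - (α + β - e)) ≤ u ^ (-(α + β - e)) * v ^ (-(α + β - e)) := by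
  have hv := hu.trans_le huv
  have hu' : u ^ (-α) * u ^ (e - (α + β - e)) = u ^ (-(α + β - e)) * u ^ (e - α) := by
    rw [← Real.rpow_add hu, ← Real.rpow_add hu]; ring_nf
  calc u ^ (-α) * v ^ (-β) * u ^ (e - (α + β - e))
      = u ^ (-(α + β - e)) * u ^ (e - α) * v ^ (-β) := by rw [← hu', mul_right_comm]
    _ ≤ u ^ (-(α + β - e)) * v ^ (e - α) * v ^ (-β) := by
        gcongr
    _ = u ^ (-(α + β - e)) * v ^ (-(α + β - e)) := by
        rw [mul_assoc, ← Real.rpow_add hv]; ring_nf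

section Bracket

variable {d : ℕ}

lemma one_le_br (x y : Zd d) : 1 ≤ br x y :=
  le_add_of_nonneg_right (Finset.sum_nonneg fun _ _ => abs_nonneg _)

lemma br_pos (x y : Zd d) : 0 < br x y :=
  one_pos.trans_le (one_le_br x y)

lemma br_le_add (x y z : Zd d) : br x z ≤ br x y + br y z := by
  have : ∑ i, |(x i : ℝ) - z i| ≤ ∑ i, |(x i : ℝ) - y i| + ∑ i, |(y i : ℝ) - z i| := by
    rw [← Finset.sum_add_distrib]
    exact Finset.sum_le_sum fun i _ => abs_sub_le _ _ _
  unfold br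
  linarith [one_le_br x y]

lemma one_add_abs_sub_le_br (a z : Zd d) (i : Fin d) : 1 + |(a i : ℝ) - z i| ≤ br a z :=
  add_le_add_right (Finset.single_le_sum (f := fun j => |(a j : ℝ) - z j|)
    (fun _ _ => abs_nonneg _) (Finset.mem_univ i)) 1

lemma half_le_br_of_br_le {a x z : Zd d} (h : br a z ≤ br z x / 2) : br z x / 2 ≤ br a x := by
  linarith [br_le_add z a x, br_symm z a]

lemma rpow_neg_mul_le_min_br {γ : ℝ} (hγ : 0 ≤ γ) (x y z : Zd d) :
    br z x ^ (-γ) * br z y ^ (-γ)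
      ≤ (min (br x y * br y z) (min (br y z * br z x) (br z x * br x y))) ^ (-γ) := by
  have hmin : min (br x y * br y z) (min (br y z * br z x) (br z x * br x y)) ≤ br z x * br z y :=
    (min_le_right _ _).trans <| (min_le_left _ _).trans_eq <| by rw [br_symm y z, mul_comm]
  have hpos : 0 < min (br x y * br y z) (min (br y z * br z x) (br z x * br x y)) := by
    simp only [lt_min_iff]
    exact ⟨mul_pos (br_pos _ _) (br_pos _ _), mul_pos (br_pos _ _) (br_pos _ _),
      mul_pos (br_pos _ _) (br_pos _ _)⟩
  rw [← Real.mul_rpow (br_pos z x).le (br_pos z y).le]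
  exact Real.rpow_le_rpow_of_nonpos hpos hmin (neg_nonpos.mpr hγ)

lemma br_rpow_neg_le_prod {s : ℝ} (hs : 0 ≤ s) (a z : Zd d) :
    br a z ^ (-(s * d)) ≤ ∏ i, (1 + |(a i : ℝ) - z i|) ^ (-s) := by
  calc br a z ^ (-(s * d)) = ∏ _i : Fin d, br a z ^ (-s) := by
        rw [Finset.prod_const, Finset.card_univ, Fintype.card_fin, neg_mul_eq_neg_mul,
          Real.rpow_mul_natCast (br_pos a z).le]
    _ ≤ ∏ i, (1 + |(a i : ℝ) - z i|) ^ (-s) :=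
        Finset.prod_le_prod (fun _ _ => (Real.rpow_pos_of_pos (br_pos a z) _).le) fun i _ =>
          Real.rpow_le_rpow_of_nonpos (by positivity) (one_add_abs_sub_le_br a z i)
            (neg_nonpos.mpr hs)

noncomputable def cube (z : Zd d) (M : ℕ) : Finset (Zd d) :=
  Fintype.piFinset fun i => Finset.Icc (z i - M) (z i + M)

lemma mem_cube_of_br_le {a z : Zd d} {r : ℝ} (h : br a z ≤ r) : a ∈ cube z ⌊r⌋₊ := by
  rw [cube, Fintype.mem_piFinset]
  intro i
  have hi : ((a i - z i).natAbs : ℝ) ≤ r := by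
    rw [Nat.cast_natAbs, Int.cast_abs, Int.cast_sub]
    linarith [one_add_abs_sub_le_br a z i]
  have := Nat.le_floor hi
  rw [Finset.mem_Icc]
  omega

lemma sum_cube_br_rpow_neg_le {γ : ℝ} (hγ0 : 0 ≤ γ) (hγd : γ < d) (z : Zd d) (M : ℕ) :
    ∑ a ∈ cube z M, br a z ^ (-γ) ≤ (2 * d / (d - γ)) ^ d * ((M : ℝ) + 1) ^ ((d : ℝ) - γ) := by
  have hd : (0 : ℝ) < d := hγ0.trans_lt hγd
  set s := γ / d
  have hγs : γ = s * d := (div_mul_cancel₀ γ hd.ne').symm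
  have hs0 : 0 ≤ s := div_nonneg hγ0 hd.le
  have hs1 : s < 1 := (div_lt_one hd).mpr hγd
  calc ∑ a ∈ cube z M, br a z ^ (-γ)
      ≤ ∑ a ∈ cube z M, ∏ i, (1 + |(a i : ℝ) - z i|) ^ (-s) :=
        Finset.sum_le_sum fun a _ => hγs ▸ br_rpow_neg_le_prod hs0 a z
    _ = ∏ i, ∑ j ∈ Finset.Icc (z i - M) (z i + M), (1 + |(j : ℝ) - z i|) ^ (-s) :=
        (Finset.prod_univ_sum _ fun i (j : ℤ) => (1 + |(j : ℝ) - z i|) ^ (-s)).symm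
    _ ≤ ∏ _i : Fin d, 2 * ((M : ℝ) + 1) ^ (1 - s) / (1 - s) :=
        Finset.prod_le_prod (fun _ _ => Finset.sum_nonneg fun _ _ => by positivity)
          fun i _ => sum_Icc_rpow_neg_le hs0 hs1 (z i) M
    _ = (2 / (1 - s)) ^ d * (((M : ℝ) + 1) ^ (1 - s)) ^ d := by
        rw [Finset.prod_const, Finset.card_univ, Fintype.card_fin, mul_div_right_comm, mul_pow]
    _ = (2 * d / (d - γ)) ^ d * ((M : ℝ) + 1) ^ ((d : ℝ) - γ) := by
        have h1s : (1 - s) * d = d - γ := by rw [sub_mul, one_mul, ← hγs]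
        have h2 : 2 / (1 - s) = 2 * d / (d - γ) := by
          rw [← h1s, mul_div_mul_right _ _ hd.ne']
        rw [← Real.rpow_mul_natCast (by positivity), h1s, h2]

lemma tsum_near_kernel_le {α β γ : ℝ} (hα0 : 0 ≤ α) (hαd : α ≤ d) (hβ0 : 0 ≤ β)
    (hγ : γ = α + β - d) (hγ0 : 0 ≤ γ) (hγd : γ < d) {x y z : Zd d} (hxy : br z x ≤ br z y) :
    ∑' a : {a : Zd d // br a z ≤ br z x / 2}, br a.1 x ^ (-α) * br a.1 y ^ (-β) * br a.1 z ^ (-γ)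
      ≤ 2 ^ α * 2 ^ β * (2 * d / (d - γ)) ^ d * 2 ^ ((d : ℝ) - γ)
          * (br z x ^ (-γ) * br z y ^ (-γ)) := by
  set u := br z x
  set v := br z y
  have hu : 0 < u := br_pos z x
  have hv : 0 < v := br_pos z y
  have hK : 0 < 2 * (d : ℝ) / (d - γ) := div_pos (by linarith) (sub_pos.mpr hγd)
  have hfloor : (⌊u⌋₊ : ℝ) + 1 ≤ 2 * u := by
    linarith [Nat.floor_le hu.le, one_le_br z x]
  calc ∑' a : {a : Zd d // br a z ≤ u / 2}, br a.1 x ^ (-α) * br a.1 y ^ (-β) * br a.1 z ^ (-γ)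
      ≤ ∑ a ∈ cube z ⌊u⌋₊, 2 ^ α * u ^ (-α) * (2 ^ β * v ^ (-β)) * br a z ^ (-γ) := by
        refine tsum_subtype_le_sum (f := fun a => br a x ^ (-α) * br a y ^ (-β) * br a z ^ (-γ))
          (fun a ha => mem_cube_of_br_le (ha.trans (by linarith))) (fun a ha => ?_)
          fun a _ => by have := br_pos a z; positivity
        have hax := rpow_neg_le_of_half_le hu hα0 (half_le_br_of_br_le ha)
        have hay := rpow_neg_le_of_half_le hv hβ0
          (half_le_br_of_br_le (ha.trans (by linarith) : br a z ≤ v / 2))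
        have := br_pos a y
        have := br_pos a z
        gcongr
    _ = 2 ^ α * u ^ (-α) * (2 ^ β * v ^ (-β)) * ∑ a ∈ cube z ⌊u⌋₊, br a z ^ (-γ) :=
        (Finset.mul_sum _ _ _).symm
    _ ≤ 2 ^ α * u ^ (-α) * (2 ^ β * v ^ (-β))
          * ((2 * d / (d - γ)) ^ d * (2 * u) ^ ((d : ℝ) - γ)) := by
        gcongr
        exact (sum_cube_br_rpow_neg_le hγ0 hγd z ⌊u⌋₊).trans (by gcongr)
    _ = 2 ^ α * 2 ^ β * (2 * d / (d - γ)) ^ d * 2 ^ ((d : ℝ) - γ)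
          * (u ^ (-α) * v ^ (-β) * u ^ ((d : ℝ) - γ)) := by
        rw [Real.mul_rpow zero_le_two hu.le]; ring
    _ ≤ 2 ^ α * 2 ^ β * (2 * d / (d - γ)) ^ d * 2 ^ ((d : ℝ) - γ) * (u ^ (-γ) * v ^ (-γ)) := by
        subst hγ
        gcongr ?_ * ?_
        exact rpow_neg_mul_rpow_neg_mul_rpow_le hu hxy hαd

end Bracket

theorem statement19 {d : ℕ} (α β : ℝ) (hα : α ∈ Set.Ico (0 : ℝ) d) (hβ : β ∈ Set.Ico (0 : ℝ) d)
    (hγ : 0 < α + β - d) (hγd : α + β - d < d) :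
    ∃ C : ℝ, 0 < C ∧ ∀ x y z : Zd d, br z x ≤ br z y →
      (∑' a : {a : Zd d // br a z ≤ br z x / 2},
          br a.1 x ^ (-α) * br a.1 y ^ (-β) * br a.1 z ^ (-(α + β - d)))
        ≤ C * (br z x ^ (-(α + β - d)) * br z y ^ (-(α + β - d))) ∧
      C * (br z x ^ (-(α + β - d)) * br z y ^ (-(α + β - d)))
        ≤ C * (min (br x y * br y z) (min (br y z * br z x) (br z x * br x y)))
              ^ (-(α + β - d)) := by
  have hK : 0 < 2 * (d : ℝ) / (d - (α + β - d)) := div_pos (by linarith) (sub_pos.mpr hγd)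
  have hC : 0 < 2 ^ α * 2 ^ β * (2 * d / (d - (α + β - d))) ^ d * 2 ^ ((d : ℝ) - (α + β - d)) :=
    mul_pos (mul_pos (by positivity) (pow_pos hK d)) (by positivity)
  exact ⟨_, hC, fun x y z hxy =>
    ⟨tsum_near_kernel_le hα.1 hα.2.le hβ.1 rfl hγ.le hγd hxy,
      mul_le_mul_of_nonneg_left (rpow_neg_mul_le_min_br hγ.le x y z) hC.le⟩⟩
end
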